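/- arXiv:1003.3477 — 4 statements merged into one kernel-verified Lean document; each statement's English description precedes it below -/
import Mathlib

section
/- Let (C,S,E) be a connected bipartite graph and μ_C, μ_S fully-supported probability measures on C, S. In the flow network N (source i with arcs (i,c) of capacity μ_C(c), sink f with arcs (s,f) of capacity μ_S(s), infinite capacity on E), there exists a flow of value 1 that is strictly positive on every edge of E if and only if the strict conditions NCond hold: μ_C(U) < μ_S(S(U)) for every proper subset U ⊊ C and μ_S(V) < μ_C(C(V)) for every proper subset V ⊊ S. -/
/-!
STATEMENT 5.  In the same flow network, there exists a flow of value 1 which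
is strictly positive on every edge of E iff the strict conditions NCond hold:
μ_C(U) < μ_S(S(U)) for every nonempty proper U ⊊ C and μ_S(V) < μ_C(C(V))
for every nonempty proper V ⊊ S.  (Connectedness of (C,S,E) is assumed.)
-/

/-- adjacency of the bipartite graph on the vertex set C ⊕ S. -/
def bipAdj {C S : Type*} (E : Finset (C × S)) : (C ⊕ S) → (C ⊕ S) → Prop :=
  fun a b => match a, b with
  | .inl c, .inr s => (c, s) ∈ E
  | .inr s, .inl c => (c, s) ∈ E
  | _, _ => False

/-!
A flow of value 1 saturates both marginals. If it is positive on every edge, a proper `U ⊊ C`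
sends all of its mass into `S(U)`, while connectedness yields an edge from `C \ U` into `S(U)`
that brings in extra positive mass; hence `μ_C(U) < μ_S(S(U))`, and symmetrically for `V ⊊ S`.

Conversely, put a small mass `η` on every edge and route the remaining marginals by the
fractional Hall theorem: for small `η` the strict inequalities survive as Hall's (non-strict)
inequalities for the reduced marginals.
The fractional Hall theorem itself follows from max-flow: a flow of maximal value exists by
compactness, and if it left a row unsaturated, the set reachable from that row in the residual
graph would violate Hall's inequality.
-/

open Finset Filter Topology Relation

theorem Relation.ReflTransGen.exists_rel_boundary {α : Type*} {r : α → α → Prop} {p : α → Prop}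
    {x y : α} (h : ReflTransGen r x y) (hx : p x) (hy : ¬ p y) :
    ∃ a b, r a b ∧ p a ∧ ¬ p b := by
  induction h with
  | refl => exact absurd hx hy
  | @tail b c _ hbc ih =>
    by_cases hb : p b
    · exact ⟨b, c, hbc, hb, hy⟩
    · exact ih hb

section Connected

variable {C S : Type*} {E : Finset (C × S)}

theorem exists_neighbor_of_bipAdj_connected
    (hconn : ∀ a b : C ⊕ S, ReflTransGen (bipAdj E) a b) (c : C) (s : S) :
    ∃ c', (c', s) ∈ E := by
  obtain ⟨a, b, hab, rfl, hb⟩ :=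
    (hconn (.inr s) (.inl c)).exists_rel_boundary (p := (· = .inr s)) rfl (by simp)
  rcases b with c' | s'
  · exact ⟨c', hab⟩
  · exact hab.elim

theorem exists_crossing_edge_left [Fintype C] (hconn : ∀ a b : C ⊕ S, ReflTransGen (bipAdj E) a b)
    {U : Finset C} (hU : U.Nonempty) (hU' : U ≠ univ) :
    ∃ c₁ ∉ U, ∃ s₁, (∃ c ∈ U, (c, s₁) ∈ E) ∧ (c₁, s₁) ∈ E := by
  obtain ⟨c₀, hc₀⟩ := hU
  obtain ⟨c₁, hc₁⟩ : ∃ c₁, c₁ ∉ U := by simpa [eq_univ_iff_forall] using hU'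
  let p : C ⊕ S → Prop
    | .inl c => c ∈ U
    | .inr s => ∃ c ∈ U, (c, s) ∈ E
  obtain ⟨a, b, hab, ha, hb⟩ := (hconn (.inl c₀) (.inl c₁)).exists_rel_boundary (p := p) hc₀ hc₁
  rcases a with c | s <;> rcases b with c' | s'
  · exact hab.elim
  · exact absurd ⟨c, ha, hab⟩ hb
  · exact ⟨c', hb, s, ha, hab⟩
  · exact hab.elim

theorem exists_crossing_edge_right [Fintype S] (hconn : ∀ a b : C ⊕ S, ReflTransGen (bipAdj E) a b)
    {V : Finset S} (hV : V.Nonempty) (hV' : V ≠ univ) :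
    ∃ s₁ ∉ V, ∃ c₁, (∃ s ∈ V, (c₁, s) ∈ E) ∧ (c₁, s₁) ∈ E := by
  obtain ⟨s₀, hs₀⟩ := hV
  obtain ⟨s₁, hs₁⟩ : ∃ s₁, s₁ ∉ V := by simpa [eq_univ_iff_forall] using hV'
  let p : C ⊕ S → Prop
    | .inl c => ∃ s ∈ V, (c, s) ∈ E
    | .inr s => s ∈ V
  obtain ⟨a, b, hab, ha, hb⟩ := (hconn (.inr s₀) (.inr s₁)).exists_rel_boundary (p := p) hs₀ hs₁
  rcases a with c | s <;> rcases b with c' | s'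
  · exact hab.elim
  · exact ⟨s', hb, c, ha, hab⟩
  · exact absurd ⟨s, ha, hab⟩ hb
  · exact hab.elim

end Connected

section Sums

variable {α β : Type*} [Fintype β]

theorem sum_rows_eq_sum_sum_of_support (T : α → β → ℝ) {U : Finset α} {W : Finset β}
    (hW : ∀ a ∈ U, ∀ b, T a b ≠ 0 → b ∈ W) :
    ∑ a ∈ U, ∑ b, T a b = ∑ b ∈ W, ∑ a ∈ U, T a b := by
  rw [sum_comm]
  refine (sum_subset (subset_univ W) fun b _ hb => ?_).symm
  exact sum_eq_zero fun a ha => by_contra fun h => hb (hW a ha b h)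

theorem sum_rows_lt_sum_cols_of_support [Fintype α] (T : α → β → ℝ) (hT : ∀ a b, 0 ≤ T a b)
    {U : Finset α} {W : Finset β} (hW : ∀ a ∈ U, ∀ b, T a b ≠ 0 → b ∈ W)
    {a₁ : α} {b₁ : β} (ha₁ : a₁ ∉ U) (hb₁ : b₁ ∈ W) (h₁ : 0 < T a₁ b₁) :
    ∑ a ∈ U, ∑ b, T a b < ∑ b ∈ W, ∑ a, T a b := by
  rw [sum_rows_eq_sum_sum_of_support T hW]
  refine sum_lt_sum (fun b _ => sum_le_univ_sum_of_nonneg (hT · b)) ⟨b₁, hb₁, ?_⟩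
  exact sum_lt_sum_of_subset (subset_univ U) (mem_univ a₁) ha₁ h₁ fun a _ _ => hT a b₁

end Sums

theorem eventually_nonneg_add_mul {ι : Type*} [Finite ι] {T D : ι → ℝ} (hT : ∀ i, 0 ≤ T i)
    (hD : ∀ i, D i < 0 → 0 < T i) : ∀ᶠ δ in 𝓝[>] 0, ∀ i, 0 ≤ T i + δ * D i := by
  refine eventually_all.2 fun i => ?_
  rcases (hT i).eq_or_lt with h | h
  · have hDi : 0 ≤ D i := not_lt.1 fun hneg => (hD i hneg).ne h
    filter_upwards [self_mem_nhdsWithin] with δ (hδ : 0 < δ)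
    rw [← h]; positivity
  · have hlim : Tendsto (fun δ => T i + δ * D i) (𝓝[>] 0) (𝓝 (T i)) := by
      simpa using (((tendsto_id (x := 𝓝 (0 : ℝ))).mul_const (D i)).const_add (T i)).mono_left
        nhdsWithin_le_nhds
    exact (hlim.eventually_const_lt h).mono fun _ => le_of_lt

theorem eventually_mul_lt (k : ℝ) {x : ℝ} (hx : 0 < x) : ∀ᶠ η in 𝓝[>] 0, k * η < x := by
  have hlim : Tendsto (fun η : ℝ => k * η) (𝓝[>] 0) (𝓝 0) := by
    simpa using ((tendsto_id (x := 𝓝 (0 : ℝ))).const_mul k).mono_left nhdsWithin_le_nhds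
  exact hlim.eventually (eventually_lt_nhds hx)

section Flows

variable {α β : Type*} [Fintype α] [Fintype β] (E : Finset (α × β)) (ν : α → ℝ) (κ : β → ℝ)

/-- Feasible flows of the network `source → α → β → sink` with middle arcs `E` and capacities
`ν`, `κ` on the outer arcs, recorded by their values on the middle arcs. -/
def feasibleFlows : Set (α × β → ℝ) :=
  {T | (∀ p, 0 ≤ T p) ∧ (∀ p ∉ E, T p = 0) ∧ (∀ a, ∑ b, T (a, b) ≤ ν a) ∧
    ∀ b, ∑ a, T (a, b) ≤ κ b}

theorem isCompact_feasibleFlows : IsCompact (feasibleFlows E ν κ) := by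
  refine (isCompact_Icc (a := 0) (b := fun p : α × β => ν p.1)).of_isClosed_subset ?_ ?_
  · simp only [feasibleFlows, Set.ofPred_and, Set.ofPred_forall]
    refine (isClosed_iInter fun p => isClosed_le continuous_const (continuous_apply p)).inter
      ((isClosed_iInter fun p => isClosed_iInter fun _ =>
        isClosed_eq (continuous_apply p) continuous_const).inter
      ((isClosed_iInter fun a => isClosed_le ?_ continuous_const).inter
        (isClosed_iInter fun b => isClosed_le ?_ continuous_const))) <;> fun_prop
  · rintro T ⟨hT0, -, hrow, -⟩
    refine ⟨hT0, fun p => ?_⟩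
    calc T p = T (p.1, p.2) := rfl
      _ ≤ ∑ b, T (p.1, b) := single_le_sum (fun b _ => hT0 (p.1, b)) (mem_univ p.2)
      _ ≤ ν p.1 := hrow p.1

theorem exists_isMaxOn_feasibleFlows (hν : ∀ a, 0 ≤ ν a) (hκ : ∀ b, 0 ≤ κ b) :
    ∃ T ∈ feasibleFlows E ν κ,
      IsMaxOn (fun T : α × β → ℝ => ∑ a, ∑ b, T (a, b)) (feasibleFlows E ν κ) T :=
  (isCompact_feasibleFlows E ν κ).exists_isMaxOn ⟨0, by simp [feasibleFlows, hν, hκ]⟩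
    (by fun_prop)

end Flows

section Residual

variable {α β : Type*} [DecidableEq α] [DecidableEq β] {E : Finset (α × β)}

/-- Residual graph of a flow `T`: the arcs of `E` have infinite capacity and are never
saturated, while an arc can be traversed backwards exactly where `T` carries mass. -/
def residualAdj (E : Finset (α × β)) (T : α × β → ℝ) : α ⊕ β → α ⊕ β → Prop
  | .inl a, .inr b => (a, b) ∈ E
  | .inr b, .inl a => 0 < T (a, b)
  | _, _ => False

theorem exists_pathFlow_of_reflTransGen [Fintype α] [Fintype β] {T : α × β → ℝ}
    (hTE : ∀ p ∉ E, T p = 0) {a₀ : α} {x : α ⊕ β}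
    (h : ReflTransGen (residualAdj E T) (.inl a₀) x) :
    ∃ D : α × β → ℝ, (∀ p ∉ E, D p = 0) ∧ (∀ p, D p < 0 → 0 < T p) ∧
      (∀ a, ∑ b, D (a, b) = (if a = a₀ then 1 else 0) - if .inl a = x then 1 else 0) ∧
      ∀ b, ∑ a, D (a, b) = if .inr b = x then 1 else 0 := by
  induction h with
  | refl => exact ⟨0, by simp, by simp, by simp, by simp⟩
  | @tail x y _ hxy ih =>
    obtain ⟨D, hDE, hDT, hrow, hcol⟩ := ih
    rcases x with c | s <;> rcases y with c' | s'
    · exact hxy.elim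
    · refine ⟨D + Pi.single (c, s') 1, fun p hp => ?_, fun p hp => hDT p ?_, fun a => ?_,
        fun b => ?_⟩
      · have : p ≠ (c, s') := fun h => hp (h ▸ hxy)
        simp [hDE p hp, this]
      · by_cases hp' : p = (c, s')
        · subst hp'; simp only [Pi.add_apply, Pi.single_eq_same] at hp; linarith
        · simpa [hp'] using hp
      · simp [sum_add_distrib, hrow, Pi.single_apply, Prod.ext_iff, ite_and]
      · simp [sum_add_distrib, hcol, Pi.single_apply, Prod.ext_iff, ite_and]
    · have hpos : 0 < T (c', s) := hxy
      have hcE : (c', s) ∈ E := by_contra fun h => (hTE _ h ▸ hpos).false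
      refine ⟨D - Pi.single (c', s) 1, fun p hp => ?_, fun p hp => ?_, fun a => ?_, fun b => ?_⟩
      · have : p ≠ (c', s) := fun h => hp (h ▸ hcE)
        simp [hDE p hp, this]
      · by_cases hp' : p = (c', s)
        · exact hp' ▸ hpos
        · exact hDT p (by simpa [hp'] using hp)
      · simp [sum_sub_distrib, hrow, Pi.single_apply, Prod.ext_iff, ite_and]
      · simp [sum_sub_distrib, hcol, Pi.single_apply, Prod.ext_iff, ite_and]
    · exact hxy.elim

end Residual

section Hall

variable {α β : Type*} [Fintype α] [Fintype β] [DecidableEq α] [DecidableEq β]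
  {E : Finset (α × β)} {ν : α → ℝ} {κ : β → ℝ}

theorem col_eq_of_residualAdj {T : α × β → ℝ} (hT : T ∈ feasibleFlows E ν κ)
    (hmax : IsMaxOn (fun T : α × β → ℝ => ∑ a, ∑ b, T (a, b)) (feasibleFlows E ν κ) T)
    {a₀ : α} (ha₀ : ∑ b, T (a₀, b) < ν a₀) {b₀ : β}
    (h : ReflTransGen (residualAdj E T) (.inl a₀) (.inr b₀)) : ∑ a, T (a, b₀) = κ b₀ := by
  obtain ⟨hT0, hTE, hrow, hcol⟩ := hT
  obtain ⟨D, hDE, hDT, hDrow, hDcol⟩ := exists_pathFlow_of_reflTransGen hTE h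
  refine (hcol b₀).antisymm (not_lt.1 fun hb₀ => ?_)
  obtain ⟨δ, hnonneg, (hδ : 0 < δ), hδa, hδb⟩ := ((eventually_nonneg_add_mul hT0 hDT).and
    (eventually_mem_nhdsWithin.and (((eventually_le_nhds (sub_pos.2 ha₀)).and
      (eventually_le_nhds (sub_pos.2 hb₀))).filter_mono nhdsWithin_le_nhds))).exists
  have hrow' : ∀ a, ∑ b, (T (a, b) + δ * D (a, b)) ≤ ν a := fun a => by
    simp only [sum_add_distrib, ← mul_sum, hDrow, reduceCtorEq, if_false, sub_zero]
    split_ifs with ha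
    · subst ha; linarith
    · simpa using hrow a
  have hcol' : ∀ b, ∑ a, (T (a, b) + δ * D (a, b)) ≤ κ b := fun b => by
    simp only [sum_add_distrib, ← mul_sum, hDcol, Sum.inr.injEq]
    split_ifs with hb
    · subst hb; linarith
    · simpa using hcol b
  have hmem : (fun p => T p + δ * D p) ∈ feasibleFlows E ν κ :=
    ⟨hnonneg, fun p hp => by simp [hTE p hp, hDE p hp], hrow', hcol'⟩
  have hgain : ∑ a, ∑ b, (T (a, b) + δ * D (a, b)) = ∑ a, ∑ b, T (a, b) + δ := by
    simp [sum_add_distrib, ← mul_sum, hDrow]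
  have hle : ∑ a, ∑ b, (T (a, b) + δ * D (a, b)) ≤ ∑ a, ∑ b, T (a, b) := hmax hmem
  linarith

theorem exists_feasibleFlow_of_hall (hν : ∀ a, 0 ≤ ν a) (hκ : ∀ b, 0 ≤ κ b)
    (hall : ∀ U : Finset α,
      ∑ a ∈ U, ν a ≤ ∑ b ∈ univ.filter (fun b => ∃ a ∈ U, (a, b) ∈ E), κ b) :
    ∃ T ∈ feasibleFlows E ν κ, ∀ a, ∑ b, T (a, b) = ν a := by
  classical
  obtain ⟨T, hT, hmax⟩ := exists_isMaxOn_feasibleFlows E ν κ hν hκ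
  obtain ⟨hT0, -, hrow, -⟩ := id hT
  refine ⟨T, hT, fun a₀ => (hrow a₀).antisymm (not_lt.1 fun ha₀ => ?_)⟩
  set U := univ.filter fun a => ReflTransGen (residualAdj E T) (.inl a₀) (.inl a)
  set V := univ.filter fun b => ReflTransGen (residualAdj E T) (.inl a₀) (.inr b)
  have hNU : univ.filter (fun b => ∃ a ∈ U, (a, b) ∈ E) ⊆ V := by
    intro b hb
    obtain ⟨a, ha, hab⟩ := (mem_filter.1 hb).2
    exact mem_filter.2 ⟨mem_univ b, (mem_filter.1 ha).2.tail hab⟩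
  have hVU : ∀ b ∈ V, ∀ a, T (a, b) ≠ 0 → a ∈ U := fun b hb a hab =>
    mem_filter.2 ⟨mem_univ a, (mem_filter.1 hb).2.tail ((hT0 _).lt_of_ne' hab)⟩
  refine lt_irrefl (∑ a ∈ U, ν a) ?_
  calc ∑ a ∈ U, ν a
      ≤ ∑ b ∈ univ.filter (fun b => ∃ a ∈ U, (a, b) ∈ E), κ b := hall U
    _ ≤ ∑ b ∈ V, κ b := sum_le_sum_of_subset_of_nonneg hNU fun b _ _ => hκ b
    _ = ∑ b ∈ V, ∑ a, T (a, b) :=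
      sum_congr rfl fun b hb => (col_eq_of_residualAdj hT hmax ha₀ (mem_filter.1 hb).2).symm
    _ = ∑ a ∈ U, ∑ b ∈ V, T (a, b) := by
      rw [sum_rows_eq_sum_sum_of_support (fun b a => T (a, b)) hVU]
    _ ≤ ∑ a ∈ U, ∑ b, T (a, b) :=
      sum_le_sum fun a _ => sum_le_univ_sum_of_nonneg fun b => hT0 (a, b)
    _ < ∑ a ∈ U, ν a :=
      sum_lt_sum (fun a _ => hrow a) ⟨a₀, mem_filter.2 ⟨mem_univ _, .refl⟩, ha₀⟩

theorem hall_sub_of_strict_hall {D : α × β → ℝ} (hD : ∀ p, 0 ≤ D p)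
    (hE : ∀ b, ∃ a, (a, b) ∈ E) (hsum : ∑ a, ν a ≤ ∑ b, κ b)
    (hstrict : ∀ U : Finset α, U.Nonempty → U ≠ univ → ∑ b, ∑ a, D (a, b) ≤
      ∑ b ∈ univ.filter (fun b => ∃ a ∈ U, (a, b) ∈ E), κ b - ∑ a ∈ U, ν a)
    (U : Finset α) :
    ∑ a ∈ U, (ν a - ∑ b, D (a, b)) ≤
      ∑ b ∈ univ.filter (fun b => ∃ a ∈ U, (a, b) ∈ E), (κ b - ∑ a, D (a, b)) := by
  rw [sum_sub_distrib, sum_sub_distrib]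
  rcases U.eq_empty_or_nonempty with rfl | hU
  · simp
  by_cases hU' : U = univ
  · subst hU'
    have hN : ∀ b ∈ (univ : Finset β), ∃ a ∈ (univ : Finset α), (a, b) ∈ E :=
      fun b _ => by simpa using hE b
    rw [filter_true_of_mem hN, sum_comm (s := univ) (t := univ)]
    linarith
  · have hcol : ∑ b ∈ univ.filter (fun b => ∃ a ∈ U, (a, b) ∈ E), ∑ a, D (a, b) ≤
        ∑ b, ∑ a, D (a, b) :=
      sum_le_univ_sum_of_nonneg fun b => sum_nonneg fun a _ => hD (a, b)
    have hrow : 0 ≤ ∑ a ∈ U, ∑ b, D (a, b) := sum_nonneg fun a _ => sum_nonneg fun b _ => hD _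
    linarith [hstrict U hU hU']

theorem exists_pos_feasibleFlow_of_strict_hall (hν : ∀ a, 0 < ν a) (hκ : ∀ b, 0 < κ b)
    (hE : ∀ b, ∃ a, (a, b) ∈ E) (hsum : ∑ a, ν a ≤ ∑ b, κ b)
    (hstrict : ∀ U : Finset α, U.Nonempty → U ≠ univ →
      ∑ a ∈ U, ν a < ∑ b ∈ univ.filter (fun b => ∃ a ∈ U, (a, b) ∈ E), κ b) :
    ∃ T ∈ feasibleFlows E ν κ, (∀ p ∈ E, 0 < T p) ∧ ∀ a, ∑ b, T (a, b) = ν a := by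
  obtain ⟨η, (hη : 0 < η), hην, hηκ, hηU⟩ := (eventually_mem_nhdsWithin.and
    ((eventually_all.2 fun a => eventually_mul_lt #E (hν a)).and
      ((eventually_all.2 fun b => eventually_mul_lt #E (hκ b)).and
        (eventually_all.2 fun U => eventually_imp_distrib_left.2 fun hU =>
          eventually_imp_distrib_left.2 fun hU' =>
            eventually_mul_lt #E (sub_pos.2 (hstrict U hU hU')))))).exists
  set D : α × β → ℝ := fun p => if p ∈ E then η else 0 with hD
  have hD0 : ∀ p, 0 ≤ D p := fun p => by simp only [hD]; split_ifs <;> linarith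
  have hDtot : ∑ b, ∑ a, D (a, b) = #E * η := by
    rw [sum_comm, ← Fintype.sum_prod_type' (f := fun a b => D (a, b))]
    simp [hD]
  have hDrow : ∀ a, ∑ b, D (a, b) ≤ #E * η := fun a => by
    rw [← hDtot, sum_comm]
    exact single_le_sum (f := fun a => ∑ b, D (a, b)) (fun a _ => sum_nonneg fun b _ => hD0 _)
      (mem_univ a)
  have hDcol : ∀ b, ∑ a, D (a, b) ≤ #E * η := fun b => by
    rw [← hDtot]
    exact single_le_sum (f := fun b => ∑ a, D (a, b)) (fun b _ => sum_nonneg fun a _ => hD0 _)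
      (mem_univ b)
  obtain ⟨T, ⟨hT0, hTE, -, hcol⟩, hrow⟩ := exists_feasibleFlow_of_hall
    (E := E) (ν := fun a => ν a - ∑ b, D (a, b)) (κ := fun b => κ b - ∑ a, D (a, b))
    (fun a => by linarith [hDrow a, hην a]) (fun b => by linarith [hDcol b, hηκ b])
    (hall_sub_of_strict_hall hD0 hE hsum fun U hU hU' => by linarith [hηU U hU hU'])
  refine ⟨T + D, ⟨fun p => add_nonneg (hT0 p) (hD0 p), fun p hp => ?_, fun a => ?_, fun b => ?_⟩,
    fun p hp => ?_, fun a => ?_⟩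
  · simp [hTE p hp, hD, hp]
  · simp only [Pi.add_apply, sum_add_distrib, hrow]; linarith
  · simp only [Pi.add_apply, sum_add_distrib]; linarith [hcol b]
  · exact add_pos_of_nonneg_of_pos (hT0 p) (by simp [hD, hp, hη])
  · simp only [Pi.add_apply, sum_add_distrib, hrow]; ring

end Hall

theorem positive_flow_value_one_iff_ncond
    (C S : Type*) [Fintype C] [Fintype S] [DecidableEq C] [DecidableEq S]
    (E : Finset (C × S))
    (hconn : ∀ a b : C ⊕ S, Relation.ReflTransGen (bipAdj E) a b)  -- connected
    (μC : C → ℝ) (μS : S → ℝ)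
    (hμCpos : ∀ c, 0 < μC c) (hμSpos : ∀ s, 0 < μS s)
    (hμC1 : ∑ c : C, μC c = 1) (hμS1 : ∑ s : S, μS s = 1) :
    (∃ T : C × S → ℝ,
        (∀ p, 0 ≤ T p) ∧
        (∀ c s, (c, s) ∉ E → T (c, s) = 0) ∧
        (∀ c s, (c, s) ∈ E → 0 < T (c, s)) ∧
        (∀ c : C, ∑ s : S, T (c, s) ≤ μC c) ∧
        (∀ s : S, ∑ c : C, T (c, s) ≤ μS s) ∧
        (∑ c : C, ∑ s : S, T (c, s) = 1)) ↔
    ((∀ U : Finset C, U.Nonempty → U ≠ Finset.univ →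
        ∑ c ∈ U, μC c < ∑ s ∈ Finset.univ.filter (fun s => ∃ c ∈ U, (c, s) ∈ E), μS s) ∧
     (∀ V : Finset S, V.Nonempty → V ≠ Finset.univ →
        ∑ s ∈ V, μS s < ∑ c ∈ Finset.univ.filter (fun c => ∃ s ∈ V, (c, s) ∈ E), μC c)) := by
  constructor
  · rintro ⟨T, hT0, hTE, hTpos, hrow, hcol, htot⟩
    have hrow' : ∀ c, ∑ s, T (c, s) = μC c := fun c =>
      (sum_eq_sum_iff_of_le fun c _ => hrow c).1 (htot.trans hμC1.symm) c (mem_univ c)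
    have hcol' : ∀ s, ∑ c, T (c, s) = μS s := fun s =>
      (sum_eq_sum_iff_of_le fun s _ => hcol s).1 ((sum_comm.trans htot).trans hμS1.symm) s
        (mem_univ s)
    refine ⟨fun U hU hU' => ?_, fun V hV hV' => ?_⟩
    · obtain ⟨c₁, hc₁, s₁, hs₁, he⟩ := exists_crossing_edge_left hconn hU hU'
      simp only [← hrow', ← hcol']
      exact sum_rows_lt_sum_cols_of_support (fun c s => T (c, s)) (fun c s => hT0 _)
        (fun c hc s hne => mem_filter.2 ⟨mem_univ s, c, hc, by_contra fun h => hne (hTE c s h)⟩)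
        hc₁ (mem_filter.2 ⟨mem_univ _, hs₁⟩) (hTpos c₁ s₁ he)
    · obtain ⟨s₁, hs₁, c₁, hc₁, he⟩ := exists_crossing_edge_right hconn hV hV'
      simp only [← hrow', ← hcol']
      exact sum_rows_lt_sum_cols_of_support (fun s c => T (c, s)) (fun s c => hT0 _)
        (fun s hs c hne => mem_filter.2 ⟨mem_univ c, s, hs, by_contra fun h => hne (hTE c s h)⟩)
        hs₁ (mem_filter.2 ⟨mem_univ _, hc₁⟩) (hTpos c₁ s₁ he)
  · rintro ⟨hC, -⟩
    obtain ⟨c⟩ : Nonempty C := by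
      by_contra h
      simp [not_nonempty_iff.1 h] at hμC1
    obtain ⟨T, ⟨hT0, hTE, hrow, hcol⟩, hTpos, hrow'⟩ := exists_pos_feasibleFlow_of_strict_hall
      hμCpos hμSpos (exists_neighbor_of_bipAdj_connected hconn c) (by rw [hμC1, hμS1]) hC
    exact ⟨T, hT0, fun c s => hTE _, fun c s => hTpos _, hrow, hcol, by simp [hrow', hμC1]⟩
end

section
/- If (μ_C, μ_S) fails NCond — specifically if there exists U ⊊ C with μ_C(U) ≥ μ_S(S(U)) — then the perturbed pair (μ̃_C, μ̃_S) defined by μ̃_C(c) = (μ_C(c) − |S(c)|η)/(1−|E|η), μ̃_S(s) = (μ_S(s) − |C(s)|η)/(1−|E|η) also satisfies μ̃_C(U) ≥ μ̃_S(S(U)) for the same U, for every admissible η > 0. -/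
/-!
STATEMENT 7.  If there is U ⊊ C with μ_C(U) ≥ μ_S(S(U)), then for every
admissible η > 0 (i.e. with 1 − |E|η > 0) the perturbed pair also satisfies
μ̃_C(U) ≥ μ̃_S(S(U)) for the same U.
-/

/-- perturbed customer measure. -/
noncomputable def perturbC {C S : Type*} [Fintype C] [Fintype S] [DecidableEq C] [DecidableEq S]
    (E : Finset (C × S)) (μC : C → ℝ) (η : ℝ) : C → ℝ :=
  fun c => (μC c - ((E.filter (fun p => p.1 = c)).card : ℝ) * η) / (1 - (E.card : ℝ) * η)

/-- perturbed server measure. -/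
noncomputable def perturbS {C S : Type*} [Fintype C] [Fintype S] [DecidableEq C] [DecidableEq S]
    (E : Finset (C × S)) (μS : S → ℝ) (η : ℝ) : S → ℝ :=
  fun s => (μS s - ((E.filter (fun p => p.2 = s)).card : ℝ) * η) / (1 - (E.card : ℝ) * η)

theorem ncond_failure_preserved_by_perturbation
    (C S : Type*) [Fintype C] [Fintype S] [DecidableEq C] [DecidableEq S]
    (E : Finset (C × S))
    (μC : C → ℝ) (μS : S → ℝ)
    (U : Finset C) (hU : U ≠ Finset.univ)
    (hfail : ∑ s ∈ Finset.univ.filter (fun s => ∃ c ∈ U, (c, s) ∈ E), μS s ≤ ∑ c ∈ U, μC c)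
    (η : ℝ) (hη : 0 < η) (hadm : (E.card : ℝ) * η < 1) :
    ∑ s ∈ Finset.univ.filter (fun s => ∃ c ∈ U, (c, s) ∈ E), perturbS E μS η s
      ≤ ∑ c ∈ U, perturbC E μC η c := by
  classical
  have hD : 0 < 1 - (E.card : ℝ) * η := by linarith
  set SU := Finset.univ.filter (fun s => ∃ c ∈ U, (c, s) ∈ E) with hSU
  -- edge counting
  have hcount : ∑ c ∈ U, ((E.filter (fun p => p.1 = c)).card : ℕ)
      ≤ ∑ s ∈ SU, ((E.filter (fun p => p.2 = s)).card : ℕ) := by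
    have h1 : ∑ c ∈ U, (E.filter (fun p => p.1 = c)).card
        = (E.filter (fun p => p.1 ∈ U)).card := by
      simp only [Finset.card_filter]
      rw [Finset.sum_comm]
      refine Finset.sum_congr rfl (fun p _ => ?_)
      simp [Finset.sum_ite_eq' U p.1 (fun _ => 1)]
    have h2 : ∑ s ∈ SU, (E.filter (fun p => p.2 = s)).card
        = (E.filter (fun p => p.2 ∈ SU)).card := by
      simp only [Finset.card_filter]
      rw [Finset.sum_comm]
      refine Finset.sum_congr rfl (fun p _ => ?_)
      simp [Finset.sum_ite_eq' SU p.2 (fun _ => 1)]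
    rw [h1, h2]
    apply Finset.card_le_card
    intro p hp
    simp only [Finset.mem_filter] at hp ⊢
    refine ⟨hp.1, ?_⟩
    simp only [hSU, Finset.mem_filter, Finset.mem_univ, true_and]
    exact ⟨p.1, hp.2, hp.1⟩
  have hcountR : (∑ c ∈ U, ((E.filter (fun p => p.1 = c)).card : ℝ))
      ≤ ∑ s ∈ SU, ((E.filter (fun p => p.2 = s)).card : ℝ) := by
    exact_mod_cast hcount
  unfold perturbS perturbC
  rw [← Finset.sum_div, ← Finset.sum_div]
  apply div_le_div_of_nonneg_right _ hD.le
  rw [Finset.sum_sub_distrib, Finset.sum_sub_distrib, ← Finset.sum_mul, ← Finset.sum_mul]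
  have := mul_le_mul_of_nonneg_right hcountR (le_of_lt hη)
  linarith
end

section
/- Let (C,S,E,F) be a bipartite matching structure, and suppose some probability measure μ on C×S with support F has marginals satisfying NCond. Then the directed graph (C ∪ S, E ∪ F̃), with arcs c→s for (c,s)∈E and s→c for (c,s)∈F, is strongly connected. -/
/-!
STATEMENT 9.  Conversely: if some probability measure μ on C×S with support
exactly F has marginals satisfying NCond, then the directed graph
(C ∪ S, E ∪ F̃) is strongly connected.  ((C,S,E) is a connected bipartite
graph, F has no isolated vertices.)
-/

def NCond {C S : Type*} [Fintype C] [Fintype S] [DecidableEq C] [DecidableEq S]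
    (E : Finset (C × S)) (μC : C → ℝ) (μS : S → ℝ) : Prop :=
  (∀ U : Finset C, U.Nonempty → U ≠ Finset.univ →
      ∑ c ∈ U, μC c < ∑ s ∈ Finset.univ.filter (fun s => ∃ c ∈ U, (c, s) ∈ E), μS s) ∧
  (∀ V : Finset S, V.Nonempty → V ≠ Finset.univ →
      ∑ s ∈ V, μS s < ∑ c ∈ Finset.univ.filter (fun c => ∃ s ∈ V, (c, s) ∈ E), μC c)

/-- arcs of the directed graph (C ∪ S, E ∪ F̃): c→s if (c,s)∈E, s→c if (c,s)∈F. -/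
def dirAdj {C S : Type*} (E F : Finset (C × S)) : (C ⊕ S) → (C ⊕ S) → Prop :=
  fun a b => match a, b with
  | .inl c, .inr s => (c, s) ∈ E
  | .inr s, .inl c => (c, s) ∈ F
  | _, _ => False

theorem stable_structure_implies_strongly_connected
    (C S : Type*) [Fintype C] [Fintype S] [DecidableEq C] [DecidableEq S]
    (E F : Finset (C × S))
    (hconn : ∀ a b : C ⊕ S, Relation.ReflTransGen (bipAdj E) a b)  -- (C,S,E) connected
    (hFc : ∀ c : C, ∃ s : S, (c, s) ∈ F)  -- F without isolated vertices
    (hFs : ∀ s : S, ∃ c : C, (c, s) ∈ F)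
    (μ : C × S → ℝ)
    (hμ0 : ∀ p, 0 ≤ μ p)
    (hsupp : ∀ p : C × S, 0 < μ p ↔ p ∈ F)
    (hμ1 : ∑ p : C × S, μ p = 1)
    (hnc : NCond E (fun c => ∑ s : S, μ (c, s)) (fun s => ∑ c : C, μ (c, s))) :
    ∀ a b : C ⊕ S, Relation.ReflTransGen (dirAdj E F) a b := by
  classical
  intro a b
  set C₁ : Finset C :=
    Finset.univ.filter (fun c => Relation.ReflTransGen (dirAdj E F) a (Sum.inl c)) with hC₁
  have hmemC₁ : ∀ c, c ∈ C₁ ↔ Relation.ReflTransGen (dirAdj E F) a (Sum.inl c) := by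
    intro c; simp [hC₁]
  -- closure properties
  have hstepCS : ∀ {c s}, c ∈ C₁ → (c, s) ∈ E →
      Relation.ReflTransGen (dirAdj E F) a (Sum.inr s) := by
    intro c s hc hE
    exact ((hmemC₁ c).1 hc).tail (by simpa [dirAdj] using hE)
  have hstepSC : ∀ {c s}, Relation.ReflTransGen (dirAdj E F) a (Sum.inr s) → (c, s) ∈ F →
      c ∈ C₁ := by
    intro c s hs hF
    exact (hmemC₁ c).2 (hs.tail (by simpa [dirAdj] using hF))
  -- C₁ is nonempty
  have hne : C₁.Nonempty := by
    cases a with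
    | inl c => exact ⟨c, (hmemC₁ c).2 Relation.ReflTransGen.refl⟩
    | inr s =>
        obtain ⟨c, hc⟩ := hFs s
        exact ⟨c, hstepSC Relation.ReflTransGen.refl hc⟩
  -- C₁ = univ
  have huniv : C₁ = Finset.univ := by
    by_contra hu
    have hlt := hnc.1 C₁ hne hu
    set S₁ : Finset S := Finset.univ.filter (fun s => ∃ c ∈ C₁, (c, s) ∈ E) with hS₁
    have hS₁reach : ∀ s ∈ S₁, Relation.ReflTransGen (dirAdj E F) a (Sum.inr s) := by
      intro s hs
      rw [hS₁, Finset.mem_filter] at hs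
      obtain ⟨c, hc, hE⟩ := hs.2
      exact hstepCS hc hE
    have key : ∀ s ∈ S₁, ∑ c : C, μ (c, s) = ∑ c ∈ C₁, μ (c, s) := by
      intro s hs
      refine (Finset.sum_subset (Finset.subset_univ _) ?_).symm
      intro c _ hc
      by_contra h0
      have hpos : 0 < μ (c, s) := lt_of_le_of_ne (hμ0 _) (Ne.symm h0)
      exact hc (hstepSC (hS₁reach s hs) ((hsupp _).1 hpos))
    have hle : ∑ s ∈ S₁, ∑ c : C, μ (c, s) ≤ ∑ c ∈ C₁, ∑ s : S, μ (c, s) := by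
      calc ∑ s ∈ S₁, ∑ c : C, μ (c, s) = ∑ s ∈ S₁, ∑ c ∈ C₁, μ (c, s) :=
            Finset.sum_congr rfl key
        _ = ∑ c ∈ C₁, ∑ s ∈ S₁, μ (c, s) := Finset.sum_comm
        _ ≤ ∑ c ∈ C₁, ∑ s : S, μ (c, s) := by
            refine Finset.sum_le_sum fun c _ => ?_
            exact Finset.sum_le_sum_of_subset_of_nonneg (Finset.subset_univ _)
              (fun s _ _ => hμ0 _)
    exact absurd (lt_of_lt_of_le hlt hle) (lt_irrefl _)
  -- finish
  cases b with
  | inl c => exact (hmemC₁ c).1 (huniv ▸ Finset.mem_univ c)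
  | inr s =>
      -- find some c with (c, s) ∈ E using connectivity of the bipartite graph
      obtain ⟨c₀, hc₀⟩ := hne
      have hpath := hconn (Sum.inr s) (Sum.inl c₀)
      rcases hpath.cases_head with h | ⟨x, hx, _⟩
      · exact absurd h (by simp)
      · cases x with
        | inl c =>
            have hE : (c, s) ∈ E := by simpa [bipAdj] using hx
            exact hstepCS (huniv ▸ Finset.mem_univ c) hE
        | inr s' => exact absurd hx (by simp [bipAdj])
end

section
/- Let μ be a probability measure on C×S for a bipartite matching model with a non-zero facet F. For any admissible matching policy, the one-step expected drift of the total buffer size L(u,v) = |u| from a state in facet F equals 1 − μ_C(C_⊚(F)) − μ_S(S_⊚(F)) − μ(C_∘(F) × S_∘(F) ∩ E). -/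
/-!
STATEMENT 14.  One-step expected drift of the buffer size L(u,v) = |u| from a
state in a non-zero facet F = (U,V).  For any admissible matching policy the
change of L upon an arrival (c,s) depends only on the facet: it is −1 if
c ∈ C_⊚ = C(V) and s ∈ S_⊚ = S(U); 0 if exactly one of these holds, or if
neither holds and (c,s) ∈ E (the arriving pair match each other); and +1
otherwise.  Hence the expected drift equals
1 − μ_C(C_⊚(F)) − μ_S(S_⊚(F)) − μ(C_∘(F) × S_∘(F) ∩ E).
-/

/-- buffer-size change upon arrival (c,s) in a state of facet (U,V)
(the same for every admissible matching policy). -/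
noncomputable def deltaL {C S : Type*} [DecidableEq C] [DecidableEq S]
    (E : Finset (C × S)) (U : Finset C) (V : Finset S) (c : C) (s : S) : ℝ :=
  open scoped Classical in
  if (∃ s' ∈ V, (c, s') ∈ E) ∧ (∃ c' ∈ U, (c', s) ∈ E) then -1
  else if (∃ s' ∈ V, (c, s') ∈ E) ∨ (∃ c' ∈ U, (c', s) ∈ E) then 0
  else if (c, s) ∈ E then 0
  else 1

theorem facet_drift_formula
    (C S : Type*) [Fintype C] [Fintype S] [DecidableEq C] [DecidableEq S]
    (E : Finset (C × S))
    (μ : C × S → ℝ) (hμ0 : ∀ p, 0 ≤ μ p) (hμ1 : ∑ p : C × S, μ p = 1)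
    (U : Finset C) (V : Finset S)
    (hfacet : ∀ c ∈ U, ∀ s ∈ V, (c, s) ∉ E)       -- (U,V) is a facet
    (hnonzero : U.Nonempty ∧ V.Nonempty) :         -- a non-zero facet
    let Ccir : Finset C := Finset.univ.filter (fun c => ∃ s ∈ V, (c, s) ∈ E)
    let Scir : Finset S := Finset.univ.filter (fun s => ∃ c ∈ U, (c, s) ∈ E)
    let Co : Finset C := Finset.univ \ (U ∪ Ccir)
    let So : Finset S := Finset.univ \ (V ∪ Scir)
    (∑ c : C, ∑ s : S, μ (c, s) * deltaL E U V c s)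
      = 1 - (∑ c ∈ Ccir, ∑ s : S, μ (c, s))
          - (∑ s ∈ Scir, ∑ c : C, μ (c, s))
          - (∑ p ∈ E.filter (fun p => p.1 ∈ Co ∧ p.2 ∈ So), μ p) := by
  classical
  intro Ccir Scir Co So
  have key : ∀ c s, μ (c, s) * deltaL E U V c s
      = μ (c, s) - (if c ∈ Ccir then μ (c, s) else 0)
        - (if s ∈ Scir then μ (c, s) else 0)
        - (if (c, s) ∈ E.filter (fun p => p.1 ∈ Co ∧ p.2 ∈ So) then μ (c, s) else 0) := by
    intro c s
    have hC : c ∈ Ccir ↔ (∃ s' ∈ V, (c, s') ∈ E) := by simp [Ccir]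
    have hS : s ∈ Scir ↔ (∃ c' ∈ U, (c', s) ∈ E) := by simp [Scir]
    by_cases hA : (∃ s' ∈ V, (c, s') ∈ E) <;> by_cases hB : (∃ c' ∈ U, (c', s) ∈ E)
    · have hco : c ∉ Co := by simp [Co, Finset.mem_union, hC, hA]
      have hmem : (c, s) ∉ E.filter (fun p => p.1 ∈ Co ∧ p.2 ∈ So) := by
        simp only [Finset.mem_filter]; rintro ⟨-, h, -⟩; exact hco h
      simp [deltaL, hA, hB, hC.mpr hA, hS.mpr hB, hmem]
    · have hco : c ∉ Co := by simp [Co, Finset.mem_union, hC, hA]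
      have hmem : (c, s) ∉ E.filter (fun p => p.1 ∈ Co ∧ p.2 ∈ So) := by
        simp only [Finset.mem_filter]; rintro ⟨-, h, -⟩; exact hco h
      simp [deltaL, hA, hB, hC.mpr hA, hS, hmem]
    · have hso : s ∉ So := by simp [So, Finset.mem_union, hS, hB]
      have hmem : (c, s) ∉ E.filter (fun p => p.1 ∈ Co ∧ p.2 ∈ So) := by
        simp only [Finset.mem_filter]; rintro ⟨-, -, h⟩; exact hso h
      simp [deltaL, hA, hB, hC, hS.mpr hB, hmem]
    · by_cases hE : (c, s) ∈ E
      · have hcU : c ∉ U := fun h => hB ⟨c, h, hE⟩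
        have hsV : s ∉ V := fun h => hA ⟨s, h, hE⟩
        have hco : c ∈ Co := by simp [Co, Finset.mem_union, hC, hA, hcU]
        have hso : s ∈ So := by simp [So, Finset.mem_union, hS, hB, hsV]
        have hmem : (c, s) ∈ E.filter (fun p => p.1 ∈ Co ∧ p.2 ∈ So) :=
          Finset.mem_filter.mpr ⟨hE, hco, hso⟩
        simp [deltaL, hA, hB, hC, hS, hE, hmem]
      · have hmem : (c, s) ∉ E.filter (fun p => p.1 ∈ Co ∧ p.2 ∈ So) := by
          simp only [Finset.mem_filter]; rintro ⟨h, -, -⟩; exact hE h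
        simp [deltaL, hA, hB, hC, hS, hE, hmem]
  simp only [key, Finset.sum_sub_distrib]
  have h1 : (∑ c : C, ∑ s : S, μ (c, s)) = 1 := by
    rw [← hμ1, Fintype.sum_prod_type]
  have h2 : (∑ c : C, ∑ s : S, (if c ∈ Ccir then μ (c, s) else 0))
      = ∑ c ∈ Ccir, ∑ s : S, μ (c, s) := by
    have pull : ∀ c : C, (∑ s : S, if c ∈ Ccir then μ (c, s) else 0)
        = if c ∈ Ccir then ∑ s : S, μ (c, s) else 0 := by
      intro c; split <;> simp
    simp only [pull]
    rw [Finset.sum_ite_mem, Finset.univ_inter]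
  have h3 : (∑ c : C, ∑ s : S, (if s ∈ Scir then μ (c, s) else 0))
      = ∑ s ∈ Scir, ∑ c : C, μ (c, s) := by
    rw [Finset.sum_comm]
    have pull : ∀ s : S, (∑ c : C, if s ∈ Scir then μ (c, s) else 0)
        = if s ∈ Scir then ∑ c : C, μ (c, s) else 0 := by
      intro s; split <;> simp
    simp only [pull]
    rw [Finset.sum_ite_mem, Finset.univ_inter]
  have h4 : (∑ p ∈ E.filter (fun p => p.1 ∈ Co ∧ p.2 ∈ So), μ p)
      = ∑ c : C, ∑ s : S,
        (if (c, s) ∈ E.filter (fun p => p.1 ∈ Co ∧ p.2 ∈ So) then μ (c, s) else 0) := by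
    rw [← Finset.univ_inter (E.filter (fun p => p.1 ∈ Co ∧ p.2 ∈ So)),
      ← Finset.sum_ite_mem, Fintype.sum_prod_type]
    simp
  rw [h1, h2, h3, ← h4]
end
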